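/- arXiv:2106.02114 — 5 statements merged into one kernel-verified Lean document; each statement's English description precedes it below -/
import Mathlib

section
/- Let G be a finite simple graph with at least one edge and let s be a vertex of G. If s is covered by every maximum matching of G, then s has a neighbor v such that some maximum matching of G − s does not cover v. -/
/-- `mex S` is the least natural number not in `S`. -/
noncomputable def mex (s : Finset ℕ) : ℕ := sInf {n : ℕ | n ∉ s}

/-- The Undirected Geography Grundy value for the graph `G`, played on the set `A` of
remaining vertices (i.e. on the induced subgraph `G[A]`) with the token on `s`:
`g(A,s) = mex { g(A − s, v) : v ∈ A − s adjacent to s }`. -/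
noncomputable def geo {V : Type} [DecidableEq V] (G : SimpleGraph V) [DecidableRel G.Adj]
    (A : Finset V) (s : V) : ℕ :=
  if h : s ∈ A then
    mex (((A.erase s).filter (fun v => G.Adj s v)).image (fun v => geo G (A.erase s) v))
  else 0
termination_by A.card
decreasing_by
  simp_wf
  exact Finset.card_erase_lt_of_mem h

/-- `M` is a maximum matching of the induced subgraph of `G` on the vertex set `B`:
`M` is a matching, its vertex set lies in `B`, and no matching inside `B` covers more
vertices (equivalently, has more edges). -/
def IsMaxMatchingOn {V : Type} (G : SimpleGraph V) (B : Set V) (M : G.Subgraph) : Prop :=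
  M.IsMatching ∧ M.verts ⊆ B ∧
    ∀ M' : G.Subgraph, M'.IsMatching → M'.verts ⊆ B → M'.verts.ncard ≤ M.verts.ncard

/-- A matching `M` covers the vertex `s` iff `s` is one of its matched vertices. -/
def MatchingCovers {V : Type} {G : SimpleGraph V} (M : G.Subgraph) (s : V) : Prop :=
  s ∈ M.verts

/-!
Take a maximum matching `M` of `G`; it covers `s`, say by the edge `sv`. Deleting `s` and `v` leaves a
matching of `G - s` that misses `v`. It is maximum: matchings cover an even number of vertices, so
a larger matching of `G - s` would be as large as `M`, hence a maximum matching of `G` missing `s`.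
-/

namespace SimpleGraph.Subgraph

variable {V : Type} {G : SimpleGraph V} {M : G.Subgraph} {s v : V}

lemma IsMatching.even_ncard_verts [Finite V] (hM : M.IsMatching) : Even M.verts.ncard := by
  have := Fintype.ofFinite M.verts
  rw [Set.ncard_eq_toFinset_card']
  exact hM.even_card

lemma IsMatching.deleteVerts_pair (hM : M.IsMatching) (hsv : M.Adj s v) :
    (M.deleteVerts {s, v}).IsMatching := by
  rintro w ⟨hw, hwsv⟩
  simp only [Set.mem_insert_iff, Set.mem_singleton_iff, not_or] at hwsv
  obtain ⟨u, hwu, huniq⟩ := hM hw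
  have hus : u ≠ s := by rintro rfl; exact hwsv.2 (hM.eq_of_adj_right hwu hsv.symm)
  have huv : u ≠ v := by rintro rfl; exact hwsv.1 (hM.eq_of_adj_right hwu hsv)
  refine ⟨u, ?_, fun y hy => huniq y (deleteVerts_adj.mp hy).2.2.2.2⟩
  simp [hw, hwsv, M.edge_vert hwu.symm, hus, huv, hwu]

lemma ncard_verts_deleteVerts_pair_add_two [Finite V] (hsv : M.Adj s v) :
    (M.deleteVerts {s, v}).verts.ncard + 2 = M.verts.ncard := by
  have hsub : ({s, v} : Set V) ⊆ M.verts :=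
    Set.pair_subset (M.edge_vert hsv) (M.edge_vert hsv.symm)
  rw [deleteVerts_verts, ← Set.ncard_pair (M.adj_sub hsv).ne,
    Set.ncard_sdiff_add_ncard_of_subset hsub]

end SimpleGraph.Subgraph

open SimpleGraph.Subgraph

lemma exists_isMaxMatchingOn {V : Type} [Finite V] (G : SimpleGraph V) (B : Set V) :
    ∃ M : G.Subgraph, IsMaxMatchingOn G B M := by
  obtain ⟨M, ⟨hM, hMB⟩, hmax⟩ := Set.exists_max_image
    {M : G.Subgraph | M.IsMatching ∧ M.verts ⊆ B} (fun M => M.verts.ncard) (Set.toFinite _)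
    ⟨⊥, fun _ h => h.elim, Set.empty_subset B⟩
  exact ⟨M, hM, hMB, fun N hN hNB => hmax N ⟨hN, hNB⟩⟩

lemma IsMaxMatchingOn.deleteVerts_pair {V : Type} [Finite V] {G : SimpleGraph V}
    {M : G.Subgraph} {s v : V} (hM : IsMaxMatchingOn G Set.univ M) (hsv : M.Adj s v)
    (hs : ∀ N : G.Subgraph, IsMaxMatchingOn G Set.univ N → s ∈ N.verts) :
    IsMaxMatchingOn G {s}ᶜ (M.deleteVerts {s, v}) := by
  refine ⟨hM.1.deleteVerts_pair hsv, fun x hx hxs => hx.2 (Or.inl hxs), fun N hN hNs => ?_⟩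
  by_contra! hlt
  have hMN : M.verts.ncard ≤ N.verts.ncard := by
    have := ncard_verts_deleteVerts_pair_add_two hsv
    obtain ⟨a, ha⟩ := hM.1.even_ncard_verts
    obtain ⟨b, hb⟩ := hN.even_ncard_verts
    omega
  have hNmax : IsMaxMatchingOn G Set.univ N :=
    ⟨hN, Set.subset_univ _, fun K hK hKB => (hM.2.2 K hK hKB).trans hMN⟩
  exact hNs (hs N hNmax) rfl

theorem stmt1_general {V : Type} [Fintype V]
    (G : SimpleGraph V) (s : V)
    (hs : ∀ M : G.Subgraph, IsMaxMatchingOn G Set.univ M → MatchingCovers M s) :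
    ∃ v : V, G.Adj s v ∧
      ∃ M : G.Subgraph, IsMaxMatchingOn G {s}ᶜ M ∧ ¬ MatchingCovers M v := by
  obtain ⟨M, hM⟩ := exists_isMaxMatchingOn G Set.univ
  obtain ⟨v, hsv, -⟩ := hM.1 (hs M hM)
  exact ⟨v, M.adj_sub hsv, M.deleteVerts {s, v}, hM.deleteVerts_pair hsv hs,
    fun hv => hv.2 (Or.inr rfl)⟩

/-- if `G` has at least one edge and `s` is covered by every maximum matching
of `G`, then `s` has a neighbor `v` such that some maximum matching of `G − s`
does not cover `v`. -/
theorem stmt1 {V : Type} [Fintype V] [DecidableEq V]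
    (G : SimpleGraph V) [DecidableRel G.Adj]
    (hE : ∃ u v : V, G.Adj u v) (s : V)
    (hs : ∀ M : G.Subgraph, IsMaxMatchingOn G Set.univ M → MatchingCovers M s) :
    ∃ v : V, G.Adj s v ∧
      ∃ M : G.Subgraph, IsMaxMatchingOn G {s}ᶜ M ∧ ¬ MatchingCovers M v :=
  stmt1_general G s hs
end

section
/- Let G be a finite simple graph and let s be a vertex of G. If some maximum matching of G does not cover s, then either s has no neighbor in G, or every maximum matching of G − s covers every neighbor of s in G. -/
namespace SimpleGraph.Subgraph

variable {V : Type} {G : SimpleGraph V} {M : G.Subgraph} {u v : V}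

lemma IsMatching.sup_subgraphOfAdj (hM : M.IsMatching) (huv : G.Adj u v)
    (hu : u ∉ M.verts) (hv : v ∉ M.verts) : (M ⊔ G.subgraphOfAdj huv).IsMatching := by
  have hE := IsMatching.subgraphOfAdj huv
  refine hM.sup hE ?_
  rw [hM.support_eq_verts, hE.support_eq_verts, subgraphOfAdj_verts]
  simp [hu, hv]

lemma ncard_verts_sup_subgraphOfAdj [Finite V] (huv : G.Adj u v)
    (hu : u ∉ M.verts) (hv : v ∉ M.verts) :
    (M ⊔ G.subgraphOfAdj huv).verts.ncard = M.verts.ncard + 2 := by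
  have hu' : u ∉ insert v M.verts := by
    rintro (rfl | hu'')
    exacts [huv.ne rfl, hu hu'']
  rw [verts_sup, subgraphOfAdj_verts, Set.union_insert, Set.union_singleton,
    Set.ncard_insert_of_notMem hu', Set.ncard_insert_of_notMem hv]

end SimpleGraph.Subgraph

theorem stmt2_general {V : Type} [Fintype V]
    (G : SimpleGraph V) (s : V)
    (h : ∃ M : G.Subgraph, IsMaxMatchingOn G Set.univ M ∧ ¬ MatchingCovers M s) :
    (∀ v : V, ¬ G.Adj s v) ∨
      (∀ M : G.Subgraph, IsMaxMatchingOn G {s}ᶜ M →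
        ∀ v : V, G.Adj s v → MatchingCovers M v) := by
  obtain ⟨M, ⟨hM, -, hMmax⟩, hsM⟩ := h
  refine .inr fun M' ⟨hM', hM'verts, hM'max⟩ v hsv => ?_
  by_contra hvM'
  have hsM' : s ∉ M'.verts := fun hs => hM'verts hs rfl
  have hle : M.verts.ncard ≤ M'.verts.ncard :=
    hM'max M hM fun x hx (hxs : x = s) => hsM (hxs ▸ hx)
  -- Adding the edge `sv` to `M'` gives a matching of `G` larger than the maximum one `M`.
  have hgt := hMmax _ (hM'.sup_subgraphOfAdj hsv hsM' hvM') (Set.subset_univ _)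
  rw [SimpleGraph.Subgraph.ncard_verts_sup_subgraphOfAdj hsv hsM' hvM'] at hgt
  omega

/-- if some maximum matching of `G` does not cover `s`, then either `s` has
no neighbor in `G`, or every maximum matching of `G − s` covers every neighbor of `s`. -/
theorem stmt2 {V : Type} [Fintype V] [DecidableEq V]
    (G : SimpleGraph V) [DecidableRel G.Adj] (s : V)
    (h : ∃ M : G.Subgraph, IsMaxMatchingOn G Set.univ M ∧ ¬ MatchingCovers M s) :
    (∀ v : V, ¬ G.Adj s v) ∨
      (∀ M : G.Subgraph, IsMaxMatchingOn G {s}ᶜ M →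
        ∀ v : V, G.Adj s v → MatchingCovers M v) :=
  stmt2_general G s h
end

section
/- For every natural number n, the Undirected Geography position consisting of the tree t(n) with the token on its root has Grundy value exactly n; moreover t(n) has exactly 2^n vertices and its root has degree n. -/
/-- Parent-child relation of the binomial trees: `T` is a child of `S` iff `T` is obtained
from `S` by inserting a new element larger than everything in `S`. -/
def treeRel (S T : Finset ℕ) : Prop :=
  ∃ k ∈ T, k ∉ S ∧ (∀ j ∈ S, j < k) ∧ T = insert k S

instance : DecidableRel treeRel := fun S T => by
  unfold treeRel; infer_instance

/-- The universal tree graph: its induced subgraph on the powerset of `range n` is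
(an isomorphic copy of) the recursively defined tree `t(n)`, rooted at `∅`,
where the root of `t(n)` is joined to the roots of copies of `t(0), …, t(n−1)`. -/
def treeGraph : SimpleGraph (Finset ℕ) where
  Adj S T := S ≠ T ∧ (treeRel S T ∨ treeRel T S)
  symm := ⟨fun S T h => ⟨h.1.symm, h.2.symm⟩⟩
  loopless := ⟨fun S h => h.1 rfl⟩

instance : DecidableRel treeGraph.Adj := fun S T =>
  inferInstanceAs (Decidable (S ≠ T ∧ (treeRel S T ∨ treeRel T S)))

/-! Call `subtree n S` the set of `T ⊆ range n` that extend `S` by elements above `supSucc S`,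
the least strict upper bound of `S`; it is the subtree of `t(n)` below `S`, a copy of
`t(n - supSucc S)`. Deleting its root `S` leaves the subtrees below the children `insert j S`,
`supSucc S ≤ j < n`, each closed under adjacency, so a move to `insert j S` starts a game on
that subtree alone. By induction these have values `n - 1 - j`, which run through
`0, …, n - supSucc S - 1`, so the mex is `n - supSucc S`. -/

open Finset

theorem mex_range (n : ℕ) : mex (range n) = n := by
  have h : {m : ℕ | m ∉ range n} = Set.Ici n := by
    ext m
    simp
  rw [mex, h, csInf_Ici]

section Geography

variable {V : Type} [DecidableEq V] (G : SimpleGraph V) [DecidableRel G.Adj]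

theorem geo_of_mem {A : Finset V} {s : V} (hs : s ∈ A) :
    geo G A s = mex (((A.erase s).filter (G.Adj s)).image (geo G (A.erase s))) := by
  rw [geo, dif_pos hs]

theorem geo_eq_of_closed {A A' : Finset V} (hsub : A' ⊆ A)
    (hclosed : ∀ v ∈ A', ∀ w ∈ A, G.Adj v w → w ∈ A') {s : V} (hs : s ∈ A') :
    geo G A s = geo G A' s := by
  have hnbrs : (A.erase s).filter (G.Adj s) = (A'.erase s).filter (G.Adj s) := by
    ext w
    simp only [mem_filter, mem_erase]
    exact ⟨fun ⟨⟨hws, hw⟩, hadj⟩ => ⟨⟨hws, hclosed s hs w hw hadj⟩, hadj⟩,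
      fun ⟨⟨hws, hw⟩, hadj⟩ => ⟨⟨hws, hsub hw⟩, hadj⟩⟩
  have hclosed' : ∀ v ∈ A'.erase s, ∀ w ∈ A.erase s, G.Adj v w → w ∈ A'.erase s := by
    intro v hv w hw hadj
    exact mem_erase.2 ⟨(mem_erase.1 hw).1, hclosed v (mem_of_mem_erase hv) w
      (mem_of_mem_erase hw) hadj⟩
  rw [geo_of_mem G (hsub hs), geo_of_mem G hs, hnbrs]
  congr 1
  exact image_congr fun v hv =>
    geo_eq_of_closed (erase_subset_erase s hsub) hclosed' (mem_filter.1 hv).1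
termination_by A.card
decreasing_by exact card_erase_lt_of_mem (hsub hs)

end Geography

def supSucc (S : Finset ℕ) : ℕ := S.sup (· + 1)

@[simp]
theorem supSucc_empty : supSucc ∅ = 0 := rfl

theorem supSucc_le_iff {S : Finset ℕ} {k : ℕ} : supSucc S ≤ k ↔ ∀ j ∈ S, j < k :=
  Finset.sup_le_iff

theorem lt_supSucc {S : Finset ℕ} {j : ℕ} (hj : j ∈ S) : j < supSucc S :=
  Finset.le_sup (f := (· + 1)) hj

theorem notMem_of_supSucc_le {S : Finset ℕ} {j : ℕ} (hj : supSucc S ≤ j) : j ∉ S :=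
  fun h => (lt_supSucc h).not_ge hj

theorem supSucc_insert {S : Finset ℕ} {j : ℕ} (hj : supSucc S ≤ j) :
    supSucc (insert j S) = j + 1 := by
  rw [supSucc, sup_insert]
  exact sup_eq_left.2 (hj.trans j.le_succ)

theorem treeRel_iff {S T : Finset ℕ} : treeRel S T ↔ ∃ k, supSucc S ≤ k ∧ T = insert k S := by
  constructor
  · rintro ⟨k, -, -, hlt, rfl⟩
    exact ⟨k, supSucc_le_iff.2 hlt, rfl⟩
  · rintro ⟨k, hk, rfl⟩
    exact ⟨k, mem_insert_self k S, notMem_of_supSucc_le hk, supSucc_le_iff.1 hk, rfl⟩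

def subtree (n : ℕ) (S : Finset ℕ) : Finset (Finset ℕ) :=
  (range n).powerset.filter fun T => S ⊆ T ∧ ∀ t ∈ T, t ∉ S → supSucc S ≤ t

section Subtree

variable {n : ℕ} {S T : Finset ℕ}

theorem mem_subtree :
    T ∈ subtree n S ↔ T ⊆ range n ∧ S ⊆ T ∧ ∀ t ∈ T, t ∉ S → supSucc S ≤ t := by
  rw [subtree, mem_filter, mem_powerset]

theorem self_mem_subtree (hS : S ⊆ range n) : S ∈ subtree n S :=
  mem_subtree.2 ⟨hS, subset_rfl, fun _ ht hnt => absurd ht hnt⟩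

theorem subtree_empty : subtree n ∅ = (range n).powerset := by
  ext T
  simp [mem_subtree, supSucc]

theorem filter_adj_subtree (hS : S ⊆ range n) :
    (subtree n S).filter (treeGraph.Adj S) = (Ico (supSucc S) n).image (insert · S) := by
  ext T
  simp only [mem_filter, mem_subtree, mem_image, mem_Ico]
  constructor
  · rintro ⟨⟨hT, hST, -⟩, hne, hrel | hrel⟩
    · obtain ⟨k, hk, rfl⟩ := treeRel_iff.1 hrel
      exact ⟨k, ⟨hk, mem_range.1 (hT (mem_insert_self k S))⟩, rfl⟩
    · obtain ⟨k, hk, rfl⟩ := treeRel_iff.1 hrel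
      exact absurd (hST (mem_insert_self k T)) (notMem_of_supSucc_le hk)
  · rintro ⟨j, ⟨hSj, hjn⟩, rfl⟩
    refine ⟨⟨insert_subset (mem_range.2 hjn) hS, subset_insert j S, ?_⟩, ?_, ?_⟩
    · intro t ht hnt
      rcases mem_insert.1 ht with rfl | ht
      · exact hSj
      · exact absurd ht hnt
    · exact fun h => notMem_of_supSucc_le hSj (h ▸ mem_insert_self j S)
    · exact Or.inl (treeRel_iff.2 ⟨j, hSj, rfl⟩)

theorem subtree_insert_subset {j : ℕ} (hj : supSucc S ≤ j) :
    subtree n (insert j S) ⊆ (subtree n S).erase S := by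
  intro T hT
  obtain ⟨hT, hjS, hbig⟩ := mem_subtree.1 hT
  refine mem_erase.2 ⟨fun h => notMem_of_supSucc_le hj (h ▸ hjS (mem_insert_self j S)),
    mem_subtree.2 ⟨hT, (subset_insert j S).trans hjS, fun t ht htS => ?_⟩⟩
  by_cases htj : t = j
  · exact htj ▸ hj
  · have hjt := hbig t ht (by simp [htj, htS])
    rw [supSucc_insert hj] at hjt
    omega

theorem mem_subtree_insert_of_adj {j : ℕ} {v w : Finset ℕ} (hj : supSucc S ≤ j)
    (hv : v ∈ subtree n (insert j S)) (hw : w ∈ (subtree n S).erase S)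
    (hadj : treeGraph.Adj v w) : w ∈ subtree n (insert j S) := by
  obtain ⟨-, hjSv, hv_above⟩ := mem_subtree.1 hv
  obtain ⟨hwS, hw⟩ := mem_erase.1 hw
  obtain ⟨hwn, hSw, -⟩ := mem_subtree.1 hw
  rw [supSucc_insert hj] at hv_above
  rcases hadj.2 with hrel | hrel
  · obtain ⟨i, hi, rfl⟩ := treeRel_iff.1 hrel
    refine mem_subtree.2 ⟨hwn, hjSv.trans (subset_insert i v), fun t ht htjS => ?_⟩
    rw [supSucc_insert hj]
    rcases mem_insert.1 ht with rfl | ht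
    · exact (lt_supSucc (hjSv (mem_insert_self j S))).trans_le hi
    · exact hv_above t ht htjS
  · obtain ⟨i, hi, rfl⟩ := treeRel_iff.1 hrel
    -- if `v` were `insert j w`, an element of `w` outside `S` would be both above and below `j`
    have hjw : j ∈ w := by
      rcases mem_insert.1 (hjSv (mem_insert_self j S)) with rfl | hjw
      · obtain ⟨t, htw, htS⟩ := not_subset.1 fun h => hwS (h.antisymm hSw)
        have htj : t < j := (lt_supSucc htw).trans_le hi
        have := hv_above t (mem_insert_of_mem htw) (by simp [htS, htj.ne])
        omega
      · exact hjw
    refine mem_subtree.2 ⟨hwn, insert_subset hjw hSw, fun t ht htjS => ?_⟩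
    rw [supSucc_insert hj]
    exact hv_above t (mem_insert_of_mem ht) htjS

theorem image_Ico_sub_succ (b : ℕ) :
    (Ico b n).image (fun j => n - (j + 1)) = range (n - b) := by
  ext m
  simp only [mem_image, mem_Ico, mem_range]
  exact ⟨fun ⟨j, hj, hm⟩ => by omega, fun hm => ⟨n - (m + 1), by omega, by omega⟩⟩

end Subtree

theorem geo_subtree {n : ℕ} {S : Finset ℕ} (hS : S ⊆ range n) :
    geo treeGraph (subtree n S) S = n - supSucc S := by
  have hchild : ∀ j ∈ Ico (supSucc S) n,
      geo treeGraph ((subtree n S).erase S) (insert j S) = n - (j + 1) := by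
    intro j hj
    obtain ⟨hSj, hjn⟩ := mem_Ico.1 hj
    have hjS : insert j S ⊆ range n := insert_subset (mem_range.2 hjn) hS
    rw [geo_eq_of_closed treeGraph (subtree_insert_subset hSj)
        (fun v hv w hw hadj => mem_subtree_insert_of_adj hSj hv hw hadj) (self_mem_subtree hjS),
      geo_subtree hjS, supSucc_insert hSj]
  have hroot : S ∉ (Ico (supSucc S) n).image (insert · S) := by
    rw [← filter_adj_subtree hS]
    exact fun h => (mem_filter.1 h).2.ne rfl
  rw [geo_of_mem treeGraph (self_mem_subtree hS), filter_erase, filter_adj_subtree hS,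
    erase_eq_of_notMem hroot, image_image, Function.comp_def, image_congr hchild,
    image_Ico_sub_succ, mex_range]
termination_by n - supSucc S
decreasing_by rw [supSucc_insert hSj]; omega

/-- the Undirected Geography position consisting of the tree `t(n)`
(realized as the induced subgraph of `treeGraph` on the powerset of `range n`) with the
token on its root `∅` has Grundy value exactly `n`; moreover `t(n)` has exactly `2^n`
vertices and its root has degree `n`. -/
theorem stmt5 (n : ℕ) :
    geo treeGraph ((Finset.range n).powerset) ∅ = n ∧
    ((Finset.range n).powerset).card = 2 ^ n ∧
    (((Finset.range n).powerset).filter (fun T => treeGraph.Adj ∅ T)).card = n := by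
  refine ⟨?_, by rw [card_powerset, card_range], ?_⟩
  · simpa [subtree_empty] using geo_subtree (empty_subset (range n))
  · rw [← subtree_empty, filter_adj_subtree (empty_subset _),
      card_image_of_injective _ fun a b h => by simpa using h, supSucc_empty, Nat.card_Ico, n.sub_zero]
end

section
/- Let D be a finite directed graph with reduced undirected graph D', let (x,y) be an arc of D, and let a, a₀, b, c, c₀, d, d₀, f be the gadget vertices of this arc in D'. Let K be the induced subgraph of D' on any vertex subset that includes x and all of a, a₀, b, c, c₀, d, d₀, f. If y belongs to K, then g(K − {x,a,b,c,d}, y) = 1 if and only if g(K − x, a) = 1. If y does not belong to K, then g(K − x, a) = 2. -/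
/-- Vertices of the reduced undirected graph `D'` of a directed graph `D` on `V`:
original vertices (`orig`), one pendant vertex per original vertex (`pend`), and for
each arc `e` the eight gadget vertices `a, a₀, b, c, c₀, d, d₀, f`, encoded as
`gad e 0, …, gad e 7` in that order. -/
abbrev RedV (V : Type) : Type := V ⊕ V ⊕ ((V × V) × Fin 8)

def orig {V : Type} (v : V) : RedV V := Sum.inl v
def pend {V : Type} (v : V) : RedV V := Sum.inr (Sum.inl v)
def gad {V : Type} (e : V × V) (i : Fin 8) : RedV V := Sum.inr (Sum.inr (e, i))

/-- The internal edges of the gadget for one arc, with the names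
`a = 0, a₀ = 1, b = 2, c = 3, c₀ = 4, d = 5, d₀ = 6, f = 7`:
`{a,a₀}, {a,b}, {b,c}, {c,c₀}, {b,f}, {c,d}, {d,d₀}, {f,d}`. -/
def gadgetPairs : List (Fin 8 × Fin 8) :=
  [(0,1), (0,2), (2,3), (3,4), (2,7), (3,5), (5,6), (7,5)]

/-- Base edge relation of the reduced graph `D'` of the digraph with arc set `A`:
each vertex `v` gets a pendant edge `{v, v₀}`, and each arc `(x,y) ∈ A` is replaced
by its gadget, with edges `{x,a}` and `{d,y}` to the original vertices and the
internal gadget edges. -/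
def redRel {V : Type} [DecidableEq V] (A : Finset (V × V)) : RedV V → RedV V → Prop
  | Sum.inl v, Sum.inr (Sum.inl w) => v = w
  | Sum.inl v, Sum.inr (Sum.inr (e, i)) =>
      e ∈ A ∧ ((v = e.1 ∧ i = 0) ∨ (v = e.2 ∧ i = 5))
  | Sum.inr (Sum.inr (e, i)), Sum.inr (Sum.inr (e', j)) =>
      e = e' ∧ e ∈ A ∧ (i, j) ∈ gadgetPairs
  | _, _ => False

instance {V : Type} [DecidableEq V] (A : Finset (V × V)) : DecidableRel (redRel A) :=
  fun u w => by
    rcases u with v | v | ⟨e, i⟩ <;> rcases w with v' | v' | ⟨e', j⟩ <;>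
      simp only [redRel] <;> infer_instance

/-- The reduced undirected graph `D'` of the digraph with vertex type `V` and
arc set `A`. -/
def reduced {V : Type} [DecidableEq V] (A : Finset (V × V)) : SimpleGraph (RedV V) where
  Adj u w := u ≠ w ∧ (redRel A u w ∨ redRel A w u)
  symm := ⟨fun u w h => ⟨h.1.symm, h.2.symm⟩⟩
  loopless := ⟨fun u h => h.1 rfl⟩

instance {V : Type} [DecidableEq V] (A : Finset (V × V)) : DecidableRel (reduced A).Adj :=
  fun u w => inferInstanceAs (Decidable (u ≠ w ∧ (redRel A u w ∨ redRel A w u)))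

/-!
Moving from `a` in `K − x`, the options are the leaf `a₀`, worth `0`, and `b`. Going down the
path `b, c, d` the same happens: besides the next vertex of the path, every option is worth `0`
(the leaves `c₀`, `d₀`, and `f`, whose only move is to `d`, from where the leaf `d₀` wins).
Hence `g(a)` arises from `γ = g(K − {x,a,b,c,d}, y)`, which is `0` when `y ∉ K`, by four
applications of `φ n = mex {0, n}`. Since `φ 1 = 2` and `φ n = 1` otherwise, `φ⁴ γ` is `1` if
`γ = 1` and `2` otherwise.
-/

lemma mex_notMem (s : Finset ℕ) : mex s ∉ s :=
  Nat.sInf_mem (s := {n | n ∉ s}) (Infinite.exists_notMem_finset s)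

lemma mex_eq_of_forall_lt_mem {s : Finset ℕ} {n : ℕ} (hn : n ∉ s) (h : ∀ m < n, m ∈ s) :
    mex s = n :=
  le_antisymm (Nat.sInf_le hn) (not_lt.1 fun hlt => mex_notMem s (h _ hlt))

lemma mex_eq_zero_iff {s : Finset ℕ} : mex s = 0 ↔ 0 ∉ s :=
  ⟨fun h => h ▸ mex_notMem s, fun h => mex_eq_of_forall_lt_mem h (by simp)⟩

lemma mex_zero_pair (n : ℕ) : mex {0, n} = if n = 1 then 2 else 1 := by
  split_ifs with h
  · subst h
    exact mex_eq_of_forall_lt_mem (by simp) (by intro m hm; interval_cases m <;> simp)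
  · exact mex_eq_of_forall_lt_mem (by simp [Ne.symm h]) (by simp)

section Geography

variable {V : Type} [DecidableEq V] {G : SimpleGraph V} [DecidableRel G.Adj] {S : Finset V} {s : V}

lemma geo_of_notMem (hs : s ∉ S) : geo G S s = 0 := by
  rw [geo, dif_neg hs]

lemma geo_eq_mex_of_adj_iff {N : Finset V} (hN : ∀ v, G.Adj s v ↔ v ∈ N) (hs : s ∈ S) :
    geo G S s = mex ((N.filter (· ∈ S)).image (geo G (S.erase s))) := by
  rw [geo, dif_pos hs]
  congr 2
  ext v
  simp only [Finset.mem_filter, Finset.mem_erase, ← hN]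
  exact ⟨fun h => ⟨h.2, h.1.2⟩, fun h => ⟨⟨(G.ne_of_adj h.1).symm, h.2⟩, h.1⟩⟩

lemma geo_eq_zero_of_forall (h : ∀ v ∈ S, G.Adj s v → geo G (S.erase s) v ≠ 0) :
    geo G S s = 0 := by
  by_cases hs : s ∈ S
  · rw [geo, dif_pos hs, mex_eq_zero_iff]
    simp only [Finset.mem_image, Finset.mem_filter, Finset.mem_erase, not_exists, not_and]
    exact fun v hv => h v hv.1.2 hv.2
  · exact geo_of_notMem hs

lemma geo_eq_zero_of_neighbors_notMem {N : Finset V} (hN : ∀ v, G.Adj s v ↔ v ∈ N)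
    (h : ∀ v ∈ N, v ∉ S) : geo G S s = 0 :=
  geo_eq_zero_of_forall fun v hv hadj => absurd hv (h v ((hN v).1 hadj))

lemma geo_ne_zero_of_adj {v : V} (hs : s ∈ S) (hv : v ∈ S) (hadj : G.Adj s v)
    (h : geo G (S.erase s) v = 0) : geo G S s ≠ 0 := by
  rw [geo, dif_pos hs, Ne, mex_eq_zero_iff, not_not]
  exact Finset.mem_image.2
    ⟨v, Finset.mem_filter.2 ⟨Finset.mem_erase.2 ⟨(G.ne_of_adj hadj).symm, hv⟩, hadj⟩, h⟩

end Geography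

@[simp] lemma gad_inj {V : Type} {e e' : V × V} {i j : Fin 8} :
    gad e i = gad e' j ↔ e = e' ∧ i = j := by simp [gad, Prod.ext_iff]

@[simp] lemma gad_ne_orig {V : Type} (e : V × V) (i : Fin 8) (v : V) :
    gad e i ≠ orig v := by simp [gad, orig]

section Gadget

variable {V : Type} [DecidableEq V] {A : Finset (V × V)} {e : V × V} {S : Finset (RedV V)}

lemma reduced_adj_a (he : e ∈ A) (v : RedV V) :
    (reduced A).Adj (gad e 0) v ↔ v ∈ ({orig e.1, gad e 1, gad e 2} : Finset _) := by
  rcases v with _ | _ | ⟨e', j⟩ <;> simp [reduced, redRel, gad, orig, he, gadgetPairs]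
  grind

lemma reduced_adj_a₀ (he : e ∈ A) (v : RedV V) :
    (reduced A).Adj (gad e 1) v ↔ v ∈ ({gad e 0} : Finset _) := by
  rcases v with _ | _ | ⟨e', j⟩ <;> simp [reduced, redRel, gad, he, gadgetPairs]
  grind

lemma reduced_adj_b (he : e ∈ A) (v : RedV V) :
    (reduced A).Adj (gad e 2) v ↔ v ∈ ({gad e 0, gad e 3, gad e 7} : Finset _) := by
  rcases v with _ | _ | ⟨e', j⟩ <;> simp [reduced, redRel, gad, he, gadgetPairs]
  grind

lemma reduced_adj_c (he : e ∈ A) (v : RedV V) :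
    (reduced A).Adj (gad e 3) v ↔ v ∈ ({gad e 2, gad e 4, gad e 5} : Finset _) := by
  rcases v with _ | _ | ⟨e', j⟩ <;> simp [reduced, redRel, gad, he, gadgetPairs]
  grind

lemma reduced_adj_c₀ (he : e ∈ A) (v : RedV V) :
    (reduced A).Adj (gad e 4) v ↔ v ∈ ({gad e 3} : Finset _) := by
  rcases v with _ | _ | ⟨e', j⟩ <;> simp [reduced, redRel, gad, he, gadgetPairs]
  grind

lemma reduced_adj_d (he : e ∈ A) (v : RedV V) :
    (reduced A).Adj (gad e 5) v ↔
      v ∈ ({orig e.2, gad e 3, gad e 6, gad e 7} : Finset _) := by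
  rcases v with _ | _ | ⟨e', j⟩ <;> simp [reduced, redRel, gad, orig, he, gadgetPairs]
  grind

lemma reduced_adj_d₀ (he : e ∈ A) (v : RedV V) :
    (reduced A).Adj (gad e 6) v ↔ v ∈ ({gad e 5} : Finset _) := by
  rcases v with _ | _ | ⟨e', j⟩ <;> simp [reduced, redRel, gad, he, gadgetPairs]
  grind

lemma reduced_adj_f (he : e ∈ A) (v : RedV V) :
    (reduced A).Adj (gad e 7) v ↔ v ∈ ({gad e 2, gad e 5} : Finset _) := by
  rcases v with _ | _ | ⟨e', j⟩ <;> simp [reduced, redRel, gad, he, gadgetPairs]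
  grind

lemma geo_reduced_d (he : e ∈ A) (hd : gad e 5 ∈ S) (hd₀ : gad e 6 ∈ S) (hf : gad e 7 ∈ S)
    (hb : gad e 2 ∉ S) (hc : gad e 3 ∉ S) :
    geo (reduced A) S (gad e 5) = mex {0, geo (reduced A) (S.erase (gad e 5)) (orig e.2)} := by
  have hd₀_val : geo (reduced A) (S.erase (gad e 5)) (gad e 6) = 0 :=
    geo_eq_zero_of_neighbors_notMem (reduced_adj_d₀ he) (by simp)
  have hf_val : geo (reduced A) (S.erase (gad e 5)) (gad e 7) = 0 :=
    geo_eq_zero_of_neighbors_notMem (reduced_adj_f he) (by simp [hb])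
  rw [geo_eq_mex_of_adj_iff (reduced_adj_d he) hd]
  by_cases hy : orig e.2 ∈ S
  · simp only [Finset.filter_insert, Finset.filter_singleton, hy, hc, hd₀, hf, if_true, if_false,
      Finset.image_insert, Finset.image_singleton, hd₀_val, hf_val, Finset.mem_singleton,
      Finset.insert_eq_of_mem]
    rw [Finset.pair_comm]
  · have hy_val : geo (reduced A) (S.erase (gad e 5)) (orig e.2) = 0 :=
      geo_of_notMem (by simp [hy])
    simp [Finset.filter_insert, Finset.filter_singleton, hy, hc, hd₀, hf, hd₀_val, hf_val, hy_val]

lemma geo_reduced_f (he : e ∈ A) (hd : gad e 5 ∈ S) (hd₀ : gad e 6 ∈ S) (hb : gad e 2 ∉ S) :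
    geo (reduced A) S (gad e 7) = 0 := by
  refine geo_eq_zero_of_forall fun v hv hadj => ?_
  obtain rfl | rfl : v = gad e 2 ∨ v = gad e 5 := by simpa using (reduced_adj_f he v).1 hadj
  · exact absurd hv hb
  · exact geo_ne_zero_of_adj (by simp [hd]) (by simp [hd₀]) ((reduced_adj_d he _).2 (by simp))
      (geo_eq_zero_of_neighbors_notMem (reduced_adj_d₀ he) (by simp))

lemma geo_reduced_c (he : e ∈ A) (hc : gad e 3 ∈ S) (hc₀ : gad e 4 ∈ S) (hd : gad e 5 ∈ S)
    (hb : gad e 2 ∉ S) :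
    geo (reduced A) S (gad e 3) = mex {0, geo (reduced A) (S.erase (gad e 3)) (gad e 5)} := by
  have hc₀_val : geo (reduced A) (S.erase (gad e 3)) (gad e 4) = 0 :=
    geo_eq_zero_of_neighbors_notMem (reduced_adj_c₀ he) (by simp)
  rw [geo_eq_mex_of_adj_iff (reduced_adj_c he) hc]
  simp [Finset.filter_insert, Finset.filter_singleton, hb, hc₀, hd, hc₀_val]

lemma geo_reduced_b (he : e ∈ A) (hb : gad e 2 ∈ S) (hc : gad e 3 ∈ S) (hd : gad e 5 ∈ S)
    (hd₀ : gad e 6 ∈ S) (hf : gad e 7 ∈ S) (ha : gad e 0 ∉ S) :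
    geo (reduced A) S (gad e 2) = mex {0, geo (reduced A) (S.erase (gad e 2)) (gad e 3)} := by
  have hf_val : geo (reduced A) (S.erase (gad e 2)) (gad e 7) = 0 :=
    geo_reduced_f he (by simp [hd]) (by simp [hd₀]) (by simp)
  rw [geo_eq_mex_of_adj_iff (reduced_adj_b he) hb]
  simp only [Finset.filter_insert, Finset.filter_singleton, ha, hc, hf, if_true, if_false,
    Finset.image_insert, Finset.image_singleton, hf_val]
  rw [Finset.pair_comm]

lemma geo_reduced_a (he : e ∈ A) (ha : gad e 0 ∈ S) (ha₀ : gad e 1 ∈ S) (hb : gad e 2 ∈ S)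
    (hx : orig e.1 ∉ S) :
    geo (reduced A) S (gad e 0) = mex {0, geo (reduced A) (S.erase (gad e 0)) (gad e 2)} := by
  have ha₀_val : geo (reduced A) (S.erase (gad e 0)) (gad e 1) = 0 :=
    geo_eq_zero_of_neighbors_notMem (reduced_adj_a₀ he) (by simp)
  rw [geo_eq_mex_of_adj_iff (reduced_adj_a he) ha]
  simp [Finset.filter_insert, Finset.filter_singleton, hx, ha₀, hb, ha₀_val]

lemma geo_reduced_a_eq_ite (he : e ∈ A) (hx : orig e.1 ∉ S) (hgad : ∀ i, gad e i ∈ S) :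
    geo (reduced A) S (gad e 0) =
      if geo (reduced A) (S \ {gad e 0, gad e 2, gad e 3, gad e 5}) (orig e.2) = 1 then 1 else 2 := by
  have hT : S \ {gad e 0, gad e 2, gad e 3, gad e 5} =
      (((S.erase (gad e 0)).erase (gad e 2)).erase (gad e 3)).erase (gad e 5) := by
    ext v
    simp only [Finset.mem_sdiff, Finset.mem_insert, Finset.mem_singleton, Finset.mem_erase]
    tauto
  rw [geo_reduced_a he (hgad 0) (hgad 1) (hgad 2) hx,
    geo_reduced_b he (by simp [hgad]) (by simp [hgad]) (by simp [hgad]) (by simp [hgad])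
      (by simp [hgad]) (by simp),
    geo_reduced_c he (by simp [hgad]) (by simp [hgad]) (by simp [hgad]) (by simp),
    geo_reduced_d he (by simp [hgad]) (by simp [hgad]) (by simp [hgad]) (by simp) (by simp), hT]
  simp only [mex_zero_pair]
  split_ifs <;> omega

end Gadget

theorem stmt7_general {V : Type} [DecidableEq V] (A : Finset (V × V)) (x y : V)
    (hxy : (x, y) ∈ A) (B : Finset (RedV V))
    (hgad : ∀ i : Fin 8, gad (x, y) i ∈ B) :
    (orig y ∈ B →
      (geo (reduced A)
        (B \ {orig x, gad (x, y) 0, gad (x, y) 2, gad (x, y) 3, gad (x, y) 5})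
        (orig y) = 1 ↔
       geo (reduced A) (B.erase (orig x)) (gad (x, y) 0) = 1)) ∧
    (orig y ∉ B →
      geo (reduced A) (B.erase (orig x)) (gad (x, y) 0) = 2) := by
  have key := geo_reduced_a_eq_ite hxy (Finset.notMem_erase (orig x) B)
    fun i => Finset.mem_erase.2 ⟨gad_ne_orig _ _ _, hgad i⟩
  rw [Finset.erase_sdiff_comm, ← Finset.sdiff_insert] at key
  refine ⟨fun _ => ?_, fun hy => ?_⟩
  · rw [key]
    split_ifs with h <;> simp [h]
  · rw [key, geo_of_notMem (by simp [hy]), if_neg zero_ne_one]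

/-- Correct Way: let `(x,y)` be an arc of `D` with gadget vertices
`a = gad 0, b = gad 2, c = gad 3, d = gad 5`, and let `B` be any vertex subset of `D'`
containing `x` and all eight gadget vertices of this arc, defining `K = D'[B]`.
If `y ∈ K` then `g(K − {x,a,b,c,d}, y) = 1 ↔ g(K − x, a) = 1`;
if `y ∉ K` then `g(K − x, a) = 2`. -/
theorem stmt7 {V : Type} [DecidableEq V] (A : Finset (V × V)) (x y : V)
    (hxy : (x, y) ∈ A) (B : Finset (RedV V))
    (hx : orig x ∈ B) (hgad : ∀ i : Fin 8, gad (x, y) i ∈ B) :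
    (orig y ∈ B →
      (geo (reduced A)
        (B \ {orig x, gad (x, y) 0, gad (x, y) 2, gad (x, y) 3, gad (x, y) 5})
        (orig y) = 1 ↔
       geo (reduced A) (B.erase (orig x)) (gad (x, y) 0) = 1)) ∧
    (orig y ∉ B →
      geo (reduced A) (B.erase (orig x)) (gad (x, y) 0) = 2) :=
  stmt7_general A x y hxy B hgad
end

section
/- Let D be a finite directed graph and D' its reduced undirected graph. If every vertex of D is incident to at most Δ arcs (counting both incoming and outgoing arcs), then every vertex of D' has degree at most max(Δ + 1, 4); in particular, if Δ ≤ 3 then D' has maximum degree at most 4. Moreover, if the underlying undirected graph of D is bipartite (2-colorable), then D' is bipartite. -/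
/-!
An original vertex `v` of `D'` is adjacent to its pendant vertex and to one gadget vertex per
arc at `v` (the vertex `a` of an outgoing arc, `d` of an incoming one), so its degree is at
most `Δ + 1`. Pendant vertices have degree 1; inside a gadget only `a` and `d` reach outside,
and each has degree 3 within the gadget, so gadget vertices have degree at most 4.

For bipartiteness, give each pendant vertex the opposite colour of its vertex, and each gadget
vertex the colour of the arc's tail `x` iff its distance from `x` is even. The head `y` is
adjacent only to `d`, at distance 4 from `x`, and `y` is coloured differently from `x`.
-/

open Finset SimpleGraph

namespace Reduced

variable {V : Type} [DecidableEq V] (A : Finset (V × V))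

lemma not_redRel_orig_right (w : RedV V) (v : V) : ¬ redRel A w (orig v) := by
  rcases w with w | w | ⟨e, i⟩ <;> simp [orig, redRel]

lemma not_redRel_pend_left (w : RedV V) (v : V) : ¬ redRel A (pend v) w := by
  rcases w with w | w | ⟨e, i⟩ <;> simp [pend, redRel]

def gadgetNbrs (i : Fin 8) : Finset (Fin 8) :=
  univ.filter fun j => (i, j) ∈ gadgetPairs ∨ (j, i) ∈ gadgetPairs

def gadgetPorts (e : V × V) (i : Fin 8) : Finset (RedV V) :=
  (if i = 0 then {orig e.1} else ∅) ∪ (if i = 5 then {orig e.2} else ∅)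

lemma card_gadgetNbrs_add_le (i : Fin 8) :
    #(gadgetNbrs i) + (if i = 0 then 1 else 0) + (if i = 5 then 1 else 0) ≤ 4 := by
  decide +revert

section Degree

variable [Fintype V]

lemma neighborFinset_orig_subset (v : V) :
    (reduced A).neighborFinset (orig v) ⊆ insert (pend v)
      ((A.filter (fun e => e.1 = v)).image (gad · 0) ∪
        (A.filter (fun e => e.2 = v)).image (gad · 5)) := by
  intro w hw
  obtain ⟨-, h | h⟩ := (mem_neighborFinset _ _ _).1 hw
  · rcases w with w | w | ⟨e, i⟩ <;> simp only [orig, redRel] at h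
    · exact h ▸ mem_insert_self _ _
    · obtain ⟨he, ⟨rfl, rfl⟩ | ⟨rfl, rfl⟩⟩ := h
      · exact mem_insert_of_mem <| mem_union_left _ <|
          mem_image_of_mem _ (mem_filter.2 ⟨he, rfl⟩)
      · exact mem_insert_of_mem <| mem_union_right _ <|
          mem_image_of_mem _ (mem_filter.2 ⟨he, rfl⟩)
  · exact absurd h (not_redRel_orig_right A w v)

lemma degree_orig_le (v : V) :
    (reduced A).degree (orig v) ≤
      (A.filter (fun e => e.1 = v)).card + (A.filter (fun e => e.2 = v)).card + 1 := by
  rw [← card_neighborFinset_eq_degree]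
  calc _ ≤ _ := card_le_card (neighborFinset_orig_subset A v)
    _ ≤ _ := card_insert_le _ _
    _ ≤ _ := by gcongr; exact (card_union_le _ _).trans (add_le_add card_image_le card_image_le)

lemma neighborFinset_pend_subset (v : V) :
    (reduced A).neighborFinset (pend v) ⊆ {orig v} := by
  intro w hw
  obtain ⟨-, h | h⟩ := (mem_neighborFinset _ _ _).1 hw
  · exact absurd h (not_redRel_pend_left A w v)
  · rcases w with w | w | ⟨e, i⟩ <;> simp only [pend, redRel] at h
    exact h ▸ mem_singleton_self _

lemma degree_pend_le (v : V) : (reduced A).degree (pend v) ≤ 1 := by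
  rw [← card_neighborFinset_eq_degree, ← card_singleton (orig v)]
  exact card_le_card (neighborFinset_pend_subset A v)

lemma neighborFinset_gad_subset (e : V × V) (i : Fin 8) :
    (reduced A).neighborFinset (gad e i) ⊆ (gadgetNbrs i).image (gad e) ∪ gadgetPorts e i := by
  intro w hw
  obtain ⟨-, h | h⟩ := (mem_neighborFinset _ _ _).1 hw
  · rcases w with w | w | ⟨e', j⟩ <;> simp only [gad, redRel] at h
    obtain ⟨rfl, -, hp⟩ := h
    exact mem_union_left _ (mem_image_of_mem _ (mem_filter.2 ⟨mem_univ _, Or.inl hp⟩))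
  · rcases w with w | w | ⟨e', j⟩ <;> simp only [gad, redRel] at h
    · obtain ⟨-, ⟨rfl, rfl⟩ | ⟨rfl, rfl⟩⟩ := h <;> simp [gadgetPorts, orig]
    · obtain ⟨rfl, -, hp⟩ := h
      exact mem_union_left _ (mem_image_of_mem _ (mem_filter.2 ⟨mem_univ _, Or.inr hp⟩))

lemma degree_gad_le (e : V × V) (i : Fin 8) : (reduced A).degree (gad e i) ≤ 4 := by
  rw [← card_neighborFinset_eq_degree]
  calc _ ≤ _ := card_le_card (neighborFinset_gad_subset A e i)
    _ ≤ #(gadgetNbrs i) + #(gadgetPorts e i) :=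
      (card_union_le _ _).trans (by gcongr; exact card_image_le)
    _ ≤ #(gadgetNbrs i) + (if i = 0 then 1 else 0) + (if i = 5 then 1 else 0) := by
      rw [add_assoc, gadgetPorts]
      gcongr
      exact (card_union_le _ _).trans (by gcongr <;> split_ifs <;> simp)
    _ ≤ 4 := card_gadgetNbrs_add_le i

lemma degree_le_max {Δ : ℕ}
    (hΔ : ∀ v : V,
      (A.filter (fun e => e.1 = v)).card + (A.filter (fun e => e.2 = v)).card ≤ Δ)
    (u : RedV V) : (reduced A).degree u ≤ max (Δ + 1) 4 := by
  rcases u with v | v | ⟨e, i⟩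
  · exact ((degree_orig_le A v).trans (by gcongr; exact hΔ v)).trans (le_max_left _ _)
  · exact (degree_pend_le A v).trans (by omega)
  · exact (degree_gad_le A e i).trans (le_max_right _ _)

end Degree

section Coloring

-- indices 1, 2, 4, 5 are `a₀, b, c₀, d`, the gadget vertices at even distance from the tail
def gadgetColor (t : Bool) (i : Fin 8) : Bool :=
  if i ∈ ({1, 2, 4, 5} : Finset (Fin 8)) then t else !t

lemma gadgetColor_ne_of_mem_gadgetPairs (t : Bool) :
    ∀ p ∈ gadgetPairs, gadgetColor t p.1 ≠ gadgetColor t p.2 := by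
  decide +revert

def liftColoring (c : V → Bool) : RedV V → Bool
  | Sum.inl v => c v
  | Sum.inr (Sum.inl v) => !c v
  | Sum.inr (Sum.inr (e, i)) => gadgetColor (c e.1) i

variable {A}

lemma liftColoring_ne_of_redRel {c : V → Bool} (hc : ∀ e ∈ A, c e.1 ≠ c e.2) {u w : RedV V}
    (h : redRel A u w) : liftColoring c u ≠ liftColoring c w := by
  rcases u with v | v | ⟨e, i⟩ <;> rcases w with v' | v' | ⟨e', j⟩ <;>
    simp only [redRel] at h
  · simp [liftColoring, h]
  · obtain ⟨he, ⟨rfl, rfl⟩ | ⟨rfl, rfl⟩⟩ := h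
    · simp [liftColoring, gadgetColor]
    · simpa [liftColoring, gadgetColor, eq_comm] using hc e' he
  · obtain ⟨rfl, -, hp⟩ := h
    exact gadgetColor_ne_of_mem_gadgetPairs _ (i, j) hp

lemma liftColoring_ne_of_adj {c : V → Bool} (hc : ∀ e ∈ A, c e.1 ≠ c e.2) {u w : RedV V}
    (h : (reduced A).Adj u w) : liftColoring c u ≠ liftColoring c w :=
  h.2.elim (liftColoring_ne_of_redRel hc) fun h' => (liftColoring_ne_of_redRel hc h').symm

end Coloring

end Reduced

/-- if every vertex of the digraph `D` (with arc set `A`) is incident to at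
most `Δ` arcs, counting both incoming and outgoing arcs, then every vertex of the reduced
undirected graph `D'` has degree at most `max (Δ + 1) 4`; in particular, if `Δ ≤ 3` then
`D'` has maximum degree at most `4`.  Moreover, if the underlying undirected graph of `D`
is bipartite (its vertices can be 2-colored so that the endpoints of every arc receive
different colors), then `D'` is bipartite. -/
theorem stmt16 {V : Type} [Fintype V] [DecidableEq V] (A : Finset (V × V)) (Δ : ℕ)
    (hΔ : ∀ v : V,
      (A.filter (fun e => e.1 = v)).card + (A.filter (fun e => e.2 = v)).card ≤ Δ) :
    (∀ u : RedV V, (reduced A).degree u ≤ max (Δ + 1) 4) ∧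
    (Δ ≤ 3 → ∀ u : RedV V, (reduced A).degree u ≤ 4) ∧
    ((∃ c : V → Bool, ∀ x y : V, ((x, y) ∈ A ∨ (y, x) ∈ A) → c x ≠ c y) →
      ∃ c : RedV V → Bool, ∀ u w : RedV V, (reduced A).Adj u w → c u ≠ c w) := by
  refine ⟨Reduced.degree_le_max A hΔ, fun hΔ3 u => ?_, ?_⟩
  · exact (Reduced.degree_le_max A hΔ u).trans (by omega)
  · rintro ⟨c, hc⟩
    exact ⟨Reduced.liftColoring c, fun u w =>
      Reduced.liftColoring_ne_of_adj fun e he => hc e.1 e.2 (Or.inl he)⟩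
end
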